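/- arXiv:0910.1360 — 2 statements merged into one kernel-verified Lean document; each statement's English description precedes it below -/
import Mathlib

section
/- Let T be a countably branching tree with a strictly order-preserving function f: T → ℝ. Then there exists a tree embedding ψ: T → σQ such that the image ψ(T) is an initial segment (initial subtree) of σQ and f(t) ≥ sup ψ(t) for every t ∈ T. -/
/-!
Label every successor node `r` of `T`, with parent `m ⋖ r`, by a rational strictly between `f m`
and `f r`, distinct among siblings: siblings are countably many and each interval contains
infinitely many rationals, so Hall's theorem provides such a choice. Send `t` to the set of labels
of the successor nodes below `t`. Labels increase strictly along branches, so this set is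
well-ordered and bounded by `f t`. Above a node `m`, the least label on the way to `t` is that of
the child of `m` towards `t`; as siblings carry distinct labels, this makes the map an order
embedding, and cutting a set of labels at its first missing label shows that the image is closed
under initial segments.
-/

open Filter Topology Set

universe u v

/-- A tree in the sense of the paper: a partial order with a minimal element `⊥`,
binary greatest lower bounds, and each set of predecessors `[0,t)` well ordered
(a linearly ordered, well-founded chain). -/
class TreeOrder (T : Type u) extends SemilatticeInf T, OrderBot T where
  chain_lt : ∀ t : T, IsChain (· ≤ ·) {x : T | x < t}
  isWF_lt : ∀ t : T, Set.IsWF {x : T | x < t}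

/-- `s` is an initial segment of `t` (as subsets of `ℚ`): `s ⊆ t` and every element
of `t \ s` lies above every element of `s`. -/
def QInitSeg (s t : Set ℚ) : Prop :=
  s ⊆ t ∧ ∀ x ∈ s, ∀ y ∈ t, y ∉ s → x ≤ y

theorem QInitSeg.refl (s : Set ℚ) : QInitSeg s s :=
  ⟨subset_rfl, fun _ _ y hy hyn => absurd hy hyn⟩

theorem QInitSeg.trans' {s t u : Set ℚ} (h1 : QInitSeg s t) (h2 : QInitSeg t u) :
    QInitSeg s u := by
  refine ⟨h1.1.trans h2.1, fun x hx y hy hyn => ?_⟩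
  by_cases hyt : y ∈ t
  · exact h1.2 x hx y hyt hyn
  · exact h2.2 x (h1.1 hx) y hy hyt

theorem QInitSeg.antisymm' {s t : Set ℚ} (h1 : QInitSeg s t) (h2 : QInitSeg t s) : s = t :=
  Set.Subset.antisymm h1.1 h2.1

/-- The tree `σℚ` of all bounded well-ordered subsets of `ℚ`. -/
def sigmaQ : Type := {s : Set ℚ // s.IsWF ∧ BddAbove s}

/-- `σℚ` is ordered by "being an initial segment". -/
instance : PartialOrder sigmaQ where
  le s t := QInitSeg s.1 t.1
  le_refl s := QInitSeg.refl s.1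
  le_trans _ _ _ h1 h2 := QInitSeg.trans' h1 h2
  le_antisymm _ _ h1 h2 := Subtype.ext (QInitSeg.antisymm' h1 h2)

namespace TreeOrder

variable {T : Type*} [TreeOrder T]

theorem isChain_Iic (t : T) : IsChain (· ≤ ·) (Iic t) := by
  rw [← Iio_insert]
  exact (chain_lt t).insert fun b hb _ => Or.inr hb.le

theorem isWF_Iic (t : T) : (Iic t).IsWF := by
  rw [← Iio_insert]
  exact (isWF_lt t).insert t

theorem le_total_of_le {s t u : T} (hs : s ≤ u) (ht : t ≤ u) : s ≤ t ∨ t ≤ s :=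
  (isChain_Iic u).total hs ht

theorem le_of_covBy_of_lt {m r x : T} (h : m ⋖ r) (hx : x < r) : x ≤ m := by
  rcases le_total_of_le hx.le h.1.le with hxm | hmx
  · exact hxm
  · obtain rfl | hmx := hmx.eq_or_lt
    · exact le_rfl
    · exact (h.2 hmx hx).elim

theorem eq_of_covBy {m m' r : T} (h : m ⋖ r) (h' : m' ⋖ r) : m = m' :=
  le_antisymm (le_of_covBy_of_lt h' h.1) (le_of_covBy_of_lt h h'.1)

theorem exists_covBy_le {s t : T} (h : s < t) : ∃ c, s ⋖ c ∧ c ≤ t := by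
  have hwf : {x | s < x ∧ x ≤ t}.IsWF := (isWF_Iic t).mono fun _ hx => hx.2
  have hne : {x | s < x ∧ x ≤ t}.Nonempty := ⟨t, h, le_rfl⟩
  obtain ⟨hsc, hct⟩ := hwf.min_mem hne
  exact ⟨hwf.min hne, ⟨hsc, fun x hsx hxc => hwf.not_lt_min hne ⟨hsx, hxc.le.trans hct⟩ hxc⟩, hct⟩

end TreeOrder

theorem infinite_setOf_rat_btwn {a b : ℝ} (h : a < b) :
    {q : ℚ | a < q ∧ (q : ℝ) < b}.Infinite := by
  obtain ⟨p, hap, hpb⟩ := exists_rat_btwn h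
  obtain ⟨r, hpr, hrb⟩ := exists_rat_btwn hpb
  refine (Ioo_infinite (by exact_mod_cast hpr : p < r)).mono fun q hq => ?_
  exact ⟨hap.trans (by exact_mod_cast hq.1), (by exact_mod_cast hq.2 : (q : ℝ) < r).trans hrb⟩

/-- Hall's theorem for finite `J i ⊆ I i` with `#(J i) = e i + 1`, where `e : ι → ℕ` is injective:
a finite set of indices has at most `1 + max e` elements, as many as `J` has at the maximum. -/
theorem exists_injective_forall_mem_of_infinite {ι α : Type*} [Countable ι] {I : ι → Set α}
    (hI : ∀ i, (I i).Infinite) : ∃ g : ι → α, Function.Injective g ∧ ∀ i, g i ∈ I i := by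
  classical
  obtain ⟨e, he⟩ := Countable.exists_injective_nat ι
  choose J hJI hJ using fun i => (hI i).exists_subset_card_eq (e i + 1)
  obtain ⟨g, hg, hgJ⟩ := (Finset.all_card_le_biUnion_card_iff_exists_injective J).mp fun s => by
    rcases s.eq_empty_or_nonempty with rfl | hs
    · simp
    obtain ⟨i, hi, hmax⟩ := s.exists_max_image e hs
    calc s.card = (s.image e).card := (Finset.card_image_of_injective s he).symm
      _ ≤ (Finset.range (e i + 1)).card :=
          Finset.card_le_card fun n hn => by
            obtain ⟨j, hj, rfl⟩ := Finset.mem_image.mp hn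
            exact Finset.mem_range.mpr (Nat.lt_succ_of_le (hmax j hj))
      _ = (J i).card := by rw [Finset.card_range, hJ]
      _ ≤ (s.biUnion J).card := Finset.card_le_card (Finset.subset_biUnion_of_mem J hi)
  exact ⟨g, hg, fun i => hJI i (hgJ i)⟩

structure RatLabeling {T : Type*} [Preorder T] (f : T → ℝ) where
  label : T → ℚ
  lt_label : ∀ {m r}, m ⋖ r → f m < label r
  label_lt : ∀ {m r}, m ⋖ r → (label r : ℝ) < f r
  eq_of_label_eq : ∀ {m r r'}, m ⋖ r → m ⋖ r' → label r = label r' → r = r'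

theorem RatLabeling.nonempty {T : Type*} [TreeOrder T] (hT : ∀ t : T, {s : T | t ⋖ s}.Countable)
    {f : T → ℝ} (hf : StrictMono f) : Nonempty (RatLabeling f) := by
  have hparent (r : T) : ∃ p, ∀ m, m ⋖ r → m = p := by
    by_cases h : ∃ m, m ⋖ r
    · obtain ⟨p, hp⟩ := h
      exact ⟨p, fun m hm => TreeOrder.eq_of_covBy hm hp⟩
    · exact ⟨r, fun m hm => (h ⟨m, hm⟩).elim⟩
  choose parent hparent using hparent
  have hchildren (m : T) : ∃ g : {s : T | m ⋖ s} → ℚ,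
      Function.Injective g ∧ ∀ r : {s : T | m ⋖ s}, f m < g r ∧ (g r : ℝ) < f r :=
    haveI := (hT m).to_subtype
    exists_injective_forall_mem_of_infinite fun r => infinite_setOf_rat_btwn (hf r.2.1)
  choose g hg_inj hg using hchildren
  classical
  let label (r : T) : ℚ := if h : parent r ⋖ r then g (parent r) ⟨r, h⟩ else 0
  have hlabel {m r : T} (h : m ⋖ r) : label r = g m ⟨r, h⟩ := by
    obtain rfl := hparent r m h
    exact dif_pos h
  refine ⟨label, fun h => ?_, fun h => ?_, fun h h' heq => ?_⟩
  · rw [hlabel h]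
    exact (hg _ _).1
  · rw [hlabel h]
    exact (hg _ _).2
  · rw [hlabel h, hlabel h'] at heq
    exact congrArg Subtype.val (hg_inj _ heq)

namespace RatLabeling

open TreeOrder

variable {T : Type*} [TreeOrder T] {f : T → ℝ} (L : RatLabeling f)

def embed (t : T) : Set ℚ :=
  L.label '' {r | r ≤ t ∧ ∃ m, m ⋖ r}

theorem label_mem_embed {m r t : T} (h : m ⋖ r) (hr : r ≤ t) : L.label r ∈ L.embed t :=
  ⟨r, ⟨hr, m, h⟩, rfl⟩

theorem lt_of_mem_embed (hf : Monotone f) {t : T} {x : ℚ} (hx : x ∈ L.embed t) : (x : ℝ) < f t := by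
  obtain ⟨r, ⟨hrt, m, hm⟩, rfl⟩ := hx
  exact (L.label_lt hm).trans_le (hf hrt)

theorem label_notMem_embed (hf : Monotone f) {m c : T} (h : m ⋖ c) : L.label c ∉ L.embed m :=
  fun hc => (L.lt_of_mem_embed hf hc).not_gt (L.lt_label h)

theorem label_lt_label (hf : Monotone f) {m m' r r' : T} (hr : m ⋖ r) (hr' : m' ⋖ r')
    (h : r < r') : L.label r < L.label r' := by
  have := (L.lt_of_mem_embed hf (L.label_mem_embed hr (le_of_covBy_of_lt hr' h))).trans
    (L.lt_label hr')
  exact_mod_cast this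

theorem label_le_label (hf : Monotone f) {m m' r r' : T} (hr : m ⋖ r) (hr' : m' ⋖ r')
    (h : r ≤ r') : L.label r ≤ L.label r' := by
  obtain rfl | h := h.eq_or_lt
  · exact le_rfl
  · exact (L.label_lt_label hf hr hr' h).le

theorem label_le_of_mem_embed (hf : Monotone f) {m c t : T} {x : ℚ} (hc : m ⋖ c) (hct : c ≤ t)
    (hx : x ∈ L.embed t) (hxm : x ∉ L.embed m) : L.label c ≤ x := by
  obtain ⟨r, ⟨hrt, m', hm'⟩, rfl⟩ := hx
  have hmr : m < r := by
    rcases le_total_of_le hrt (hc.1.le.trans hct) with hrm | hmr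
    · exact (hxm (L.label_mem_embed hm' hrm)).elim
    · exact hmr.lt_of_ne (by rintro rfl; exact hxm (L.label_mem_embed hm' le_rfl))
  rcases le_total_of_le hct hrt with hcr | hrc
  · exact L.label_le_label hf hc hm' hcr
  · obtain rfl | hrc := hrc.eq_or_lt
    · exact le_rfl
    · exact ((le_of_covBy_of_lt hc hrc).not_gt hmr).elim

theorem embed_isWF (hf : Monotone f) (t : T) : (L.embed t).IsWF := by
  rw [Set.IsWF, embed, wellFoundedOn_image]
  refine ((isWF_Iic t).mono fun r hr => hr.1).mono' ?_
  rintro a ⟨hat, ma, hma⟩ b ⟨hbt, mb, hmb⟩ (hab : L.label a < L.label b)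
  rcases le_total_of_le hat hbt with h | h
  · exact h.lt_of_ne (by rintro rfl; exact lt_irrefl _ hab)
  · exact ((L.label_le_label hf hmb hma h).not_gt hab).elim

theorem embed_bddAbove (hf : Monotone f) (t : T) : BddAbove (L.embed t) := by
  obtain ⟨Q, hQ⟩ := exists_rat_gt (f t)
  exact ⟨Q, fun x hx => by exact_mod_cast ((L.lt_of_mem_embed hf hx).trans hQ).le⟩

theorem embed_qInitSeg (hf : Monotone f) {s t : T} (h : s ≤ t) :
    QInitSeg (L.embed s) (L.embed t) := by
  refine ⟨image_mono fun r hr => ⟨hr.1.trans h, hr.2⟩, fun x hx y hy hys => ?_⟩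
  have hst : s < t := h.lt_of_ne (by rintro rfl; exact hys hy)
  obtain ⟨c, hc, hct⟩ := exists_covBy_le hst
  have := (L.lt_of_mem_embed hf hx).trans (L.lt_label hc)
  exact (show x < L.label c by exact_mod_cast this).le.trans
    (L.label_le_of_mem_embed hf hc hct hy hys)

/-- If `s ≰ t`, the children of `s ⊓ t` below `s` and below `t` would get the same label. -/
theorem le_of_embed_qInitSeg (hf : Monotone f) {s t : T} (h : QInitSeg (L.embed s) (L.embed t)) :
    s ≤ t := by
  by_contra hst
  obtain ⟨cs, hcs, hcss⟩ := exists_covBy_le (inf_lt_left.mpr hst)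
  have hcs_t : L.label cs ∈ L.embed t := h.1 (L.label_mem_embed hcs hcss)
  have hcs_m := L.label_notMem_embed hf hcs
  have hmt : s ⊓ t < t := inf_le_right.lt_of_ne fun e => hcs_m (by rwa [e])
  obtain ⟨ct, hct, hctt⟩ := exists_covBy_le hmt
  have h₁ : L.label ct ≤ L.label cs := L.label_le_of_mem_embed hf hct hctt hcs_t hcs_m
  have h₂ : L.label cs ≤ L.label ct := by
    by_cases hct_s : L.label ct ∈ L.embed s
    · exact L.label_le_of_mem_embed hf hcs hcss hct_s (L.label_notMem_embed hf hct)
    · exact h.2 _ (L.label_mem_embed hcs hcss) _ (L.label_mem_embed hct hctt) hct_s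
  obtain rfl := L.eq_of_label_eq hcs hct (le_antisymm h₂ h₁)
  exact hcs.1.not_ge (le_inf hcss hctt)

theorem embed_qInitSeg_iff (hf : Monotone f) {s t : T} :
    QInitSeg (L.embed s) (L.embed t) ↔ s ≤ t :=
  ⟨L.le_of_embed_qInitSeg hf, L.embed_qInitSeg hf⟩

/-- An initial segment `x` of `embed t` is cut off at the least successor node `r₀ ≤ t` whose
label is missing from `x`; then `x = embed m₀` for the parent `m₀` of `r₀`. -/
theorem exists_embed_eq_of_qInitSeg (hf : Monotone f) {x : Set ℚ} {t : T}
    (hx : QInitSeg x (L.embed t)) : ∃ s, L.embed s = x := by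
  by_cases hB : ∃ r, (r ≤ t ∧ ∃ m, m ⋖ r) ∧ L.label r ∉ x
  swap
  · push Not at hB
    exact ⟨t, Subset.antisymm (by rintro _ ⟨r, hr, rfl⟩; exact hB r hr) hx.1⟩
  have hwf : {r | (r ≤ t ∧ ∃ m, m ⋖ r) ∧ L.label r ∉ x}.IsWF :=
    (isWF_Iic t).mono fun r hr => hr.1.1
  obtain ⟨⟨hr₀t, m₀, hm₀⟩, hr₀x⟩ := hwf.min_mem hB
  refine ⟨m₀, Subset.antisymm ?_ fun ξ hξ => ?_⟩
  · rintro _ ⟨r, ⟨hrm, hr⟩, rfl⟩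
    by_contra hrx
    exact hwf.not_lt_min hB ⟨⟨hrm.trans (hm₀.1.le.trans hr₀t), hr⟩, hrx⟩ (hrm.trans_lt hm₀.1)
  obtain ⟨r, ⟨hrt, m, hm⟩, rfl⟩ := hx.1 hξ
  have hne : r ≠ hwf.min hB := by rintro rfl; exact hr₀x hξ
  refine L.label_mem_embed hm ?_
  rcases le_total_of_le hrt hr₀t with hrr₀ | hr₀r
  · exact le_of_covBy_of_lt hm₀ (hrr₀.lt_of_ne hne)
  · have := L.label_lt_label hf hm₀ hm (hr₀r.lt_of_ne hne.symm)
    exact ((hx.2 _ hξ _ (L.label_mem_embed hm₀ hr₀t) hr₀x).not_gt this).elim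

end RatLabeling

/-- Every countably branching tree with a strictly order-preserving map `f` into `ℝ`
admits a tree embedding `ψ` into `σℚ` whose image is an initial subtree of `σℚ` and
such that `f(t) ≥ sup ψ(t)` for every `t`. -/
theorem exists_treeEmbedding_sigmaQ {T : Type u} [TreeOrder T]
    (hT : ∀ t : T, {s : T | t ⋖ s}.Countable) (f : T → ℝ) (hf : StrictMono f) :
    ∃ ψ : T → sigmaQ, Function.Injective ψ ∧
      (∀ s t : T, s < t ↔ ψ s < ψ t) ∧
      (∀ (x : sigmaQ) (t : T), x ≤ ψ t → ∃ s : T, ψ s = x) ∧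
      (∀ t : T, ∀ q ∈ (ψ t).1, (q : ℝ) ≤ f t) := by
  obtain ⟨L⟩ := RatLabeling.nonempty hT hf
  have hf' := hf.monotone
  let ψ : T ↪o sigmaQ := OrderEmbedding.ofMapLEIff
    (fun t => ⟨L.embed t, L.embed_isWF hf' t, L.embed_bddAbove hf' t⟩)
    fun _ _ => L.embed_qInitSeg_iff hf'
  refine ⟨ψ, ψ.injective, fun s t => ψ.lt_iff_lt.symm, fun x t hx => ?_,
    fun t q hq => (L.lt_of_mem_embed hf' hq).le⟩
  obtain ⟨s, hs⟩ := L.exists_embed_eq_of_qInitSeg hf' hx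
  exact ⟨s, Subtype.ext hs⟩
end

section
/- Let T be an (ℝ·ℝ)-embeddable tree of cardinality at most the continuum, where ℝ·ℝ is the lexicographic product of the real line with itself. Then the one-point compactification A(T) is 3-determined. -/
open Filter Topology Set

universe u v

/-- The interval topology, generated by the intervals `(s,t]` (together with the
initial intervals `[0,t]`, which make the root an interior point of `[0,t]`). -/
def intervalTopology (T : Type u) [Preorder T] : TopologicalSpace T :=
  TopologicalSpace.generateFrom
    ({S : Set T | ∃ a b : T, S = Set.Ioc a b} ∪ {S : Set T | ∃ b : T, S = Set.Iic b})

instance TreeOrder.toTopologicalSpace (T : Type u) [TreeOrder T] : TopologicalSpace T :=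
  intervalTopology T

/-- A compact space `K` is `n`-determined if there are a second countable space `S`
and an upper semicontinuous map `Φ` from `S` to nonempty subsets of `K` of size at
most `n` whose union is all of `K`. -/
def NDetermined (n : ℕ) (K : Type u) [TopologicalSpace K] : Prop :=
  ∃ (S : Type u) (_ : TopologicalSpace S) (_ : SecondCountableTopology S) (Φ : S → Set K),
    (∀ s : S, (Φ s).Nonempty ∧ (Φ s).Finite ∧ (Φ s).ncard ≤ n) ∧
    (∀ (s : S) (V : Set K), IsOpen V → Φ s ⊆ V →
      ∃ U : Set S, IsOpen U ∧ s ∈ U ∧ ∀ s' ∈ U, Φ s' ⊆ V) ∧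
    (⋃ s : S, Φ s) = Set.univ

/-!
Write `f = (f₁, f₂)` and fix an injection `g : T → ℝ`. The parameter space is `T` itself,
topologised by countably many real coordinates (`code`), and `t` is sent to `{t, m t, ∞}`, where
`m t = blockMin f₁ t` is the least point below `t` with the same `f₁`-value. Besides `f₁ t` and
`f₂ t`, the code records for each rational `q` the value under `g` of the least `u ≤ t` with
`q < f₁ u`, and of the least `u ≤ t` with `(f₁ t, q) < f u`: where the branch below `t` crosses
the level `q`.

By compactness of the complement of a neighbourhood of `∞`, upper semicontinuity reduces to:
if a closed subset `C` of a chain `[0, b]` misses `τ` and `m τ`, then the code of `τ` is not a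
limit of codes of points of `C`. A sequence in `C` with such codes would approach `τ` from above
in `f` (impossible, as it has a least term), from below (impossible, as its supremum lies in `C`),
or from other branches. In the last case the branching point `r` lies strictly below `τ`, a
rational level separates `f r` from `f τ`, and along a monotone subsequence the crossing points
of that level stabilise; by injectivity of `g` the stable crossing point is the one below `τ`,
hence lies below `r`, which is absurd.
-/

open scoped OnePoint

namespace TreeOrder

variable {T : Type u} [TreeOrder T]

theorem le_total_of_le_s11 {x y z : T} (hx : x ≤ z) (hy : y ≤ z) : x ≤ y ∨ y ≤ x := by
  rcases hx.eq_or_lt with rfl | hx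
  · exact .inr hy
  rcases hy.eq_or_lt with rfl | hy
  · exact .inl hx.le
  rcases eq_or_ne x y with rfl | hne
  · exact .inl le_rfl
  exact chain_lt z hx hy hne

theorem acc_lt (t : T) : Acc (· < ·) t :=
  .intro t fun _ hx => (isWF_lt t).induction hx fun y hy ih =>
    .intro y fun z hz => ih z (hz.trans hy) hz

instance : WellFoundedLT T := ⟨⟨acc_lt⟩⟩

theorem exists_isLeast {s : Set T} {z : T} (hs : s ⊆ Iic z) (hne : s.Nonempty) :
    ∃ u, IsLeast s u := by
  obtain ⟨u, hu, hmin⟩ := wellFounded_lt.has_min s hne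
  refine ⟨u, hu, fun v hv => ?_⟩
  rcases le_total_of_le_s11 (hs hu) (hs hv) with h | h
  · exact h
  · exact not_lt_iff_le_imp_ge.1 (hmin v hv) h

theorem exists_isLUB {s : Set T} (hs : BddAbove s) : ∃ w, IsLUB s w := by
  obtain ⟨b, hb⟩ := hs
  obtain ⟨w, ⟨hws, -⟩, hw⟩ := exists_isLeast (s := upperBounds s ∩ Iic b) inter_subset_right
    ⟨b, hb, le_rfl⟩
  exact ⟨w, hws, fun u hu => (hw ⟨fun x hx => le_inf (hu hx) (hb hx), inf_le_right⟩).trans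
    inf_le_left⟩

theorem isPWO_Iic (z : T) : (Iic z).IsPWO := by
  refine partiallyWellOrderedOn_iff_exists_lt.2 fun y hy => ?_
  obtain ⟨_, ⟨k, rfl⟩, hk⟩ := exists_isLeast (range_subset_iff.2 hy) (range_nonempty y)
  exact ⟨k, k + 1, k.lt_succ_self, hk ⟨k + 1, rfl⟩⟩

open Classical in
noncomputable def leastBelow (p : T → Prop) (t : T) : T :=
  if h : ∃ u ≤ t, p u then (exists_isLeast (s := {u | u ≤ t ∧ p u}) (fun _ hu => hu.1)
    h).choose else t

section leastBelow

variable {p : T → Prop} {t u : T}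

theorem isLeast_leastBelow (hu : u ≤ t) (hpu : p u) :
    IsLeast {u | u ≤ t ∧ p u} (leastBelow p t) := by
  have h : ∃ u ≤ t, p u := ⟨u, hu, hpu⟩
  rw [leastBelow, dif_pos h]
  exact Exists.choose_spec _

theorem leastBelow_le (p : T → Prop) (t : T) : leastBelow p t ≤ t := by
  by_cases h : ∃ u ≤ t, p u
  · obtain ⟨u, hu, hpu⟩ := h
    exact (isLeast_leastBelow hu hpu).1.1
  · rw [leastBelow, dif_neg h]

theorem leastBelow_le_of_le (hu : u ≤ t) (hpu : p u) : leastBelow p t ≤ u :=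
  (isLeast_leastBelow hu hpu).2 ⟨hu, hpu⟩

theorem leastBelow_spec (hu : u ≤ t) (hpu : p u) : p (leastBelow p t) :=
  (isLeast_leastBelow hu hpu).1.2

theorem leastBelow_anti {t' : T} (h : t ≤ t') (hu : u ≤ t) (hpu : p u) :
    leastBelow p t' ≤ leastBelow p t :=
  leastBelow_le_of_le ((leastBelow_le p t).trans h) (leastBelow_spec hu hpu)

end leastBelow

theorem exists_Ioc_subset_of_isOpen {O : Set T} (hO : IsOpen O) {t : T} (ht : t ∈ O)
    (ht₀ : t ≠ ⊥) : ∃ a < t, Ioc a t ⊆ O := by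
  induction hO with
  | basic s hs =>
    rcases hs with ⟨a, b, rfl⟩ | ⟨b, rfl⟩
    · exact ⟨a, ht.1, fun x hx => ⟨hx.1, hx.2.trans ht.2⟩⟩
    · exact ⟨⊥, bot_lt_iff_ne_bot.2 ht₀, fun x hx => hx.2.trans ht⟩
  | univ => exact ⟨⊥, bot_lt_iff_ne_bot.2 ht₀, subset_univ _⟩
  | inter s₁ s₂ _ _ ih₁ ih₂ =>
    obtain ⟨a₁, ha₁, hs₁⟩ := ih₁ ht.1
    obtain ⟨a₂, ha₂, hs₂⟩ := ih₂ ht.2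
    rcases le_total_of_le_s11 ha₁.le ha₂.le with h | h
    · exact ⟨a₂, ha₂, subset_inter ((Ioc_subset_Ioc_left h).trans hs₁) hs₂⟩
    · exact ⟨a₁, ha₁, subset_inter hs₁ ((Ioc_subset_Ioc_left h).trans hs₂)⟩
  | sUnion _ _ ih =>
    obtain ⟨s, hs, hts⟩ := ht
    obtain ⟨a, ha, hsub⟩ := ih s hs hts
    exact ⟨a, ha, hsub.trans (subset_sUnion_of_mem hs)⟩

theorem isOpen_Ioc (a b : T) : IsOpen (Ioc a b) :=
  .basic _ (.inl ⟨a, b, rfl⟩)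

theorem isOpen_Iic (b : T) : IsOpen (Iic b) :=
  .basic _ (.inr ⟨b, rfl⟩)

theorem isClosed_Iic (b : T) : IsClosed (Iic b) := by
  refine isOpen_compl_iff.1 (isOpen_iff_forall_mem_open.2 fun t ht => ?_)
  refine ⟨Ioc (t ⊓ b) t, fun x hx hxb => ?_, isOpen_Ioc _ _, ?_, le_rfl⟩
  · exact hx.1.not_ge (le_inf hx.2 hxb)
  · exact inf_le_left.lt_of_ne fun h => ht (h ▸ inf_le_right)

theorem isLUB_mem_of_isClosed {C s : Set T} {w : T} (hC : IsClosed C) (hw : IsLUB s w)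
    (hsC : s ⊆ C) (hs : s.Nonempty) : w ∈ C := by
  obtain ⟨x, hx⟩ := hs
  by_contra hwC
  have hw₀ : w ≠ ⊥ := by
    rintro rfl
    exact hwC (le_bot_iff.1 (hw.1 hx) ▸ hsC hx)
  obtain ⟨a, haw, ha⟩ := exists_Ioc_subset_of_isOpen hC.isOpen_compl hwC hw₀
  refine haw.not_ge (hw.2 fun y hy => ?_)
  rcases le_total_of_le_s11 (hw.1 hy) haw.le with h | h
  · exact h
  · rcases h.eq_or_lt with rfl | h
    · exact le_rfl
    · exact absurd (hsC hy) (ha ⟨h, hw.1 hy⟩)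

theorem exists_lt_mem_upperBounds {C s : Set T} {p : T} (hC : IsClosed C) (hsC : s ⊆ C)
    (hs : s.Nonempty) (hp : p ∈ upperBounds s) (hpC : p ∉ C) : ∃ w < p, w ∈ upperBounds s := by
  obtain ⟨w, hw⟩ := exists_isLUB ⟨p, hp⟩
  exact ⟨w, (hw.2 hp).lt_of_ne fun h => hpC (h ▸ isLUB_mem_of_isClosed hC hw hsC hs), hw.1⟩

theorem exists_isOpen_forall_mem_of_notMem_closure {X : Type*} [TopologicalSpace X]
    {c : T → X} {m : T → T}
    (hsep : ∀ (C : Set T) (b τ : T), IsClosed C → C ⊆ Iic b → τ ∉ C → m τ ∉ C →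
      c τ ∉ closure (c '' (C ∪ m ⁻¹' C)))
    {V : Set (OnePoint T)} (hV : IsOpen V) (hinfty : (∞ : OnePoint T) ∈ V) {t : T}
    (ht : (t : OnePoint T) ∈ V) (hmt : (m t : OnePoint T) ∈ V) :
    ∃ W : Set X, IsOpen W ∧ c t ∈ W ∧
      ∀ s, c s ∈ W → (s : OnePoint T) ∈ V ∧ (m s : OnePoint T) ∈ V := by
  obtain ⟨hK, hVo⟩ := (OnePoint.isOpen_iff_of_mem' hinfty).1 hV
  set K : Set T := ((↑) ⁻¹' V)ᶜ
  obtain ⟨F, -, hF, hKF⟩ := hK.elim_finite_subcover_image (fun y _ => isOpen_Iic y)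
    fun x hx => mem_biUnion hx self_mem_Iic
  refine ⟨⋂ y ∈ F, (closure (c '' (K ∩ Iic y ∪ m ⁻¹' (K ∩ Iic y))))ᶜ,
    hF.isOpen_biInter fun y _ => isClosed_closure.isOpen_compl,
    mem_iInter₂.2 fun y _ => hsep _ y t (hVo.isClosed_compl.inter (isClosed_Iic y))
      inter_subset_right (fun h => h.1 ht) (fun h => h.1 hmt), fun s hs => ?_⟩
  rw [mem_iInter₂] at hs
  refine ⟨not_not.1 fun hsK => ?_, not_not.1 fun hmK => ?_⟩
  · obtain ⟨y, hy, hsy⟩ := mem_iUnion₂.1 (hKF hsK)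
    exact hs y hy (subset_closure ⟨s, .inl ⟨hsK, hsy⟩, rfl⟩)
  · obtain ⟨y, hy, hsy⟩ := mem_iUnion₂.1 (hKF hmK)
    exact hs y hy (subset_closure ⟨s, .inr ⟨hmK, hsy⟩, rfl⟩)

section LexEmbedding

variable {f₁ f₂ : T → ℝ}

theorem monotone_fst_of_strictMono (hf : StrictMono fun t => toLex (f₁ t, f₂ t)) :
    Monotone f₁ :=
  Prod.Lex.monotone_fst_ofLex.comp hf.monotone

theorem snd_lt_snd_of_lt (hf : StrictMono fun t => toLex (f₁ t, f₂ t)) {x y : T} (h : x < y)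
    (h₁ : f₁ x = f₁ y) : f₂ x < f₂ y := by
  simpa [Prod.Lex.toLex_lt_toLex, h₁] using hf h

theorem snd_le_snd_of_le (hf : StrictMono fun t => toLex (f₁ t, f₂ t)) {x y : T} (h : x ≤ y)
    (h₁ : f₁ x = f₁ y) : f₂ x ≤ f₂ y := by
  rcases h.eq_or_lt with rfl | h
  exacts [le_rfl, (snd_lt_snd_of_lt hf h h₁).le]

variable (f₁) in
noncomputable def blockMin (t : T) : T :=
  leastBelow (fun u => f₁ u = f₁ t) t

theorem blockMin_le (t : T) : blockMin f₁ t ≤ t :=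
  leastBelow_le _ t

theorem fst_blockMin (t : T) : f₁ (blockMin f₁ t) = f₁ t :=
  leastBelow_spec (p := fun u => f₁ u = f₁ t) le_rfl rfl

theorem blockMin_le_of_le {u t : T} (hu : u ≤ t) (h : f₁ u = f₁ t) : blockMin f₁ t ≤ u :=
  leastBelow_le_of_le hu h

theorem blockMin_blockMin (t : T) : blockMin f₁ (blockMin f₁ t) = blockMin f₁ t :=
  (blockMin_le _).antisymm <| blockMin_le_of_le (f₁ := f₁) ((blockMin_le _).trans (blockMin_le t))
    ((fst_blockMin _).trans (fst_blockMin t))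

theorem fst_lt_of_lt_blockMin (hf : StrictMono fun t => toLex (f₁ t, f₂ t)) {u t : T}
    (h : u < blockMin f₁ t) : f₁ u < f₁ t :=
  (monotone_fst_of_strictMono hf (h.le.trans (blockMin_le t))).lt_of_ne fun heq =>
    h.not_ge (blockMin_le_of_le (h.le.trans (blockMin_le t)) heq)

variable (f₁ f₂) in
noncomputable def code (g : T → ℝ) (t : T) : ℝ × ℝ × (ℚ → ℝ) × (ℚ → ℝ) :=
  (f₁ t, f₂ t, fun q => g (leastBelow (fun u => q < f₁ u) t),
    fun q => g (leastBelow (fun u => toLex (f₁ t, (q : ℝ)) < toLex (f₁ u, f₂ u)) t))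

theorem tendsto_code_iff {g : T → ℝ} {ι : Type*} {l : Filter ι} {y : ι → T} {τ : T} :
    Tendsto (fun n => code f₁ f₂ g (y n)) l (𝓝 (code f₁ f₂ g τ)) ↔
      Tendsto (fun n => f₁ (y n)) l (𝓝 (f₁ τ)) ∧ Tendsto (fun n => f₂ (y n)) l (𝓝 (f₂ τ)) ∧
      (∀ q : ℚ, Tendsto (fun n => g (leastBelow (fun u => q < f₁ u) (y n))) l
        (𝓝 (g (leastBelow (fun u => q < f₁ u) τ)))) ∧
      ∀ q : ℚ, Tendsto (fun n => g (leastBelow (fun u => toLex (f₁ (y n), (q : ℝ)) <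
        toLex (f₁ u, f₂ u)) (y n))) l
        (𝓝 (g (leastBelow (fun u => toLex (f₁ τ, (q : ℝ)) < toLex (f₁ u, f₂ u)) τ))) := by
  simp only [code, nhds_prod_eq, tendsto_prod_iff', tendsto_pi_nhds]

theorem fst_eq_of_blockMin_le (hf : StrictMono fun t => toLex (f₁ t, f₂ t)) {u t : T}
    (h₁ : blockMin f₁ t ≤ u) (h₂ : u ≤ t) : f₁ u = f₁ t :=
  (monotone_fst_of_strictMono hf h₂).antisymm
    ((fst_blockMin t).symm.trans_le (monotone_fst_of_strictMono hf h₁))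

theorem position_cases_of_ne (hf : StrictMono fun t => toLex (f₁ t, f₂ t)) {x τ : T}
    (hne : x ≠ τ) :
    f₁ τ < f₁ x ∨ (f₁ x = f₁ τ ∧ f₂ τ < f₂ x) ∨ x < blockMin f₁ τ ∨
      (blockMin f₁ τ ≤ x ∧ x < τ) ∨ (¬ x ≤ τ ∧ ¬ τ ≤ x ∧ f₁ x ≤ f₁ τ) := by
  rcases lt_or_ge (f₁ τ) (f₁ x) with h | hle
  · exact .inl h
  by_cases hxτ : x ≤ τ
  · by_cases hm : blockMin f₁ τ ≤ x
    · exact .inr <| .inr <| .inr <| .inl ⟨hm, hxτ.lt_of_ne hne⟩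
    · exact .inr <| .inr <| .inl <| lt_of_le_not_ge
        ((le_total_of_le_s11 hxτ (blockMin_le τ)).resolve_right hm) hm
  by_cases hτx : τ ≤ x
  · have heq : f₁ x = f₁ τ := hle.antisymm (monotone_fst_of_strictMono hf hτx)
    exact .inr <| .inl ⟨heq, snd_lt_snd_of_lt hf (hτx.lt_of_ne' hne) heq.symm⟩
  · exact .inr <| .inr <| .inr <| .inr ⟨hxτ, hτx, hle⟩

theorem not_tendsto_fst_of_fst_lt (hf : StrictMono fun t => toLex (f₁ t, f₂ t)) {y : ℕ → T}
    {b τ : T} (hyb : ∀ n, y n ≤ b) (hy : ∀ n, f₁ τ < f₁ (y n)) :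
    ¬ Tendsto (fun n => f₁ (y n)) atTop (𝓝 (f₁ τ)) := fun hlim => by
  obtain ⟨_, ⟨k, rfl⟩, hk⟩ := exists_isLeast (range_subset_iff.2 hyb) (range_nonempty y)
  exact (hy k).not_ge (ge_of_tendsto' hlim fun n => monotone_fst_of_strictMono hf (hk ⟨n, rfl⟩))

theorem not_tendsto_snd_of_snd_lt (hf : StrictMono fun t => toLex (f₁ t, f₂ t)) {y : ℕ → T}
    {b τ : T} (hyb : ∀ n, y n ≤ b) (hy₁ : ∀ n, f₁ (y n) = f₁ τ) (hy₂ : ∀ n, f₂ τ < f₂ (y n)) :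
    ¬ Tendsto (fun n => f₂ (y n)) atTop (𝓝 (f₂ τ)) := fun hlim => by
  obtain ⟨_, ⟨k, rfl⟩, hk⟩ := exists_isLeast (range_subset_iff.2 hyb) (range_nonempty y)
  exact (hy₂ k).not_ge (ge_of_tendsto' hlim fun n =>
    snd_le_snd_of_le hf (hk ⟨n, rfl⟩) ((hy₁ k).trans (hy₁ n).symm))

theorem not_tendsto_snd_of_blockMin_le (hf : StrictMono fun t => toLex (f₁ t, f₂ t))
    {C : Set T} (hC : IsClosed C) {y : ℕ → T} (hyC : ∀ n, y n ∈ C) {τ : T} (hτ : τ ∉ C)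
    (hy₁ : ∀ n, blockMin f₁ τ ≤ y n) (hy₂ : ∀ n, y n < τ) :
    ¬ Tendsto (fun n => f₂ (y n)) atTop (𝓝 (f₂ τ)) := fun hlim => by
  obtain ⟨w, hwτ, hw⟩ := exists_lt_mem_upperBounds hC (range_subset_iff.2 hyC)
    (range_nonempty y) (forall_mem_range.2 fun n => (hy₂ n).le) hτ
  have hyw : ∀ n, y n ≤ w := fun n => hw ⟨n, rfl⟩
  have hwτ₁ : f₁ w = f₁ τ := fst_eq_of_blockMin_le hf ((hy₁ 0).trans (hyw 0)) hwτ.le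
  exact (snd_lt_snd_of_lt hf hwτ hwτ₁).not_ge (le_of_tendsto' hlim fun n =>
    snd_le_snd_of_le hf (hyw n) ((fst_eq_of_blockMin_le hf (hy₁ n) (hy₂ n).le).trans hwτ₁.symm))

theorem not_tendsto_fst_of_lt_blockMin (hf : StrictMono fun t => toLex (f₁ t, f₂ t))
    {C : Set T} (hC : IsClosed C) {y : ℕ → T} (hyC : ∀ n, y n ∈ C) {τ : T}
    (hτ : blockMin f₁ τ ∉ C) (hy : ∀ n, y n < blockMin f₁ τ) :
    ¬ Tendsto (fun n => f₁ (y n)) atTop (𝓝 (f₁ τ)) := fun hlim => by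
  obtain ⟨w, hwτ, hw⟩ := exists_lt_mem_upperBounds hC (range_subset_iff.2 hyC)
    (range_nonempty y) (forall_mem_range.2 fun n => (hy n).le) hτ
  exact (fst_lt_of_lt_blockMin hf hwτ).not_ge (le_of_tendsto' hlim fun n =>
    monotone_fst_of_strictMono hf (hw ⟨n, rfl⟩))

theorem false_of_tendsto_leastBelow {g : T → ℝ} (hg : Function.Injective g) {p : T → Prop}
    (hp : ∀ ⦃u v⦄, u ≤ v → p u → p v) {y : ℕ → T} {z τ r : T} (hyz : ∀ n, y n ≤ z)
    (hyr : ∀ n, y n ⊓ τ ≤ r) (hr : ¬ p r) (hy : ∀ᶠ n in atTop, p (y n))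
    (hlim : Tendsto (fun n => g (leastBelow p (y n))) atTop (𝓝 (g (leastBelow p τ)))) :
    False := by
  obtain ⟨N, hN⟩ := eventually_atTop.1 hy
  obtain ⟨φ, hφ⟩ := (isPWO_Iic z).exists_monotone_subseq (f := fun n => y (n + N)) fun n => hyz _
  have hpy : ∀ n, p (y (φ n + N)) := fun n => hN _ (Nat.le_add_left _ _)
  have hv : Antitone fun n => leastBelow p (y (φ n + N)) := fun m n hmn =>
    leastBelow_anti (hφ hmn) le_rfl (hpy m)
  obtain ⟨k, hk⟩ := WellFoundedLT.antitone_chain_condition hv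
  have hσ : StrictMono fun n => φ n + N := fun m n h => by simpa using φ.strictMono h
  have hgk : g (leastBelow p (y (φ k + N))) = g (leastBelow p τ) :=
    tendsto_nhds_unique (tendsto_const_nhds.congr' (eventually_atTop.2
      ⟨k, fun n hn => congrArg g (hk n hn)⟩)) (hlim.comp hσ.tendsto_atTop)
  have hkr : leastBelow p (y (φ k + N)) ≤ r :=
    (le_inf (leastBelow_le _ _) (hg hgk ▸ leastBelow_le _ _)).trans (hyr _)
  exact hr (hp hkr (leastBelow_spec le_rfl (hpy k)))

theorem not_tendsto_code_of_incomparable (hf : StrictMono fun t => toLex (f₁ t, f₂ t))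
    {g : T → ℝ} (hg : Function.Injective g) {y : ℕ → T} {b τ : T} (hyb : ∀ n, y n ≤ b)
    (hy₁ : ∀ n, ¬ y n ≤ τ) (hy₂ : ∀ n, ¬ τ ≤ y n) (hy : ∀ n, f₁ (y n) ≤ f₁ τ) :
    ¬ Tendsto (fun n => code f₁ f₂ g (y n)) atTop (𝓝 (code f₁ f₂ g τ)) := fun hlim => by
  obtain ⟨hlim₁, hlim₂, hlimFst, hlimSnd⟩ := tendsto_code_iff.1 hlim
  obtain ⟨z, hz⟩ := exists_isLUB (s := range y) ⟨b, forall_mem_range.2 hyb⟩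
  have hyz : ∀ n, y n ≤ z := fun n => hz.1 ⟨n, rfl⟩
  have hτz : ¬ τ ≤ z := fun h => (le_total_of_le_s11 (hyz 0) h).elim (hy₁ 0) (hy₂ 0)
  set r := z ⊓ τ
  have hrτ : r < τ := inf_le_right.lt_of_ne fun h => hτz (inf_eq_right.1 h)
  have hyr : ∀ n, y n ⊓ τ ≤ r := fun n => inf_le_inf_right τ (hyz n)
  have hry : ∀ n, r ≤ y n := fun n => (le_total_of_le_s11 inf_le_left (hyz n)).resolve_right
    fun h => hy₁ n (h.trans inf_le_right)
  rcases (monotone_fst_of_strictMono hf hrτ.le).lt_or_eq with hr | hr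
  · obtain ⟨q, hrq, hqτ⟩ := exists_rat_btwn hr
    exact false_of_tendsto_leastBelow hg (p := fun u => (q : ℝ) < f₁ u)
      (fun u v huv hu => hu.trans_le (monotone_fst_of_strictMono hf huv)) hyz hyr hrq.not_gt
      ((tendsto_order.1 hlim₁).1 _ hqτ) (hlimFst q)
  · have hyτ : ∀ n, f₁ (y n) = f₁ τ := fun n =>
      (hy n).antisymm (hr ▸ monotone_fst_of_strictMono hf (hry n))
    obtain ⟨q, hrq, hqτ⟩ := exists_rat_btwn (snd_lt_snd_of_lt hf hrτ hr)
    refine false_of_tendsto_leastBelow hg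
      (p := fun u => toLex (f₁ τ, (q : ℝ)) < toLex (f₁ u, f₂ u))
      (fun u v huv hu => hu.trans_le (hf.monotone huv)) hyz hyr ?_ ?_ ?_
    · simp [Prod.Lex.toLex_lt_toLex, hr, hrq.not_gt]
    · filter_upwards [(tendsto_order.1 hlim₂).1 _ hqτ] with n hn
      simp [Prod.Lex.toLex_lt_toLex, hyτ n, hn]
    · simpa only [hyτ] using hlimSnd q

theorem code_notMem_closure_image (hf : StrictMono fun t => toLex (f₁ t, f₂ t))
    {g : T → ℝ} (hg : Function.Injective g) {C : Set T} {b τ : T} (hC : IsClosed C)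
    (hCb : C ⊆ Iic b) (hτ : τ ∉ C) (hmτ : blockMin f₁ τ ∉ C) :
    code f₁ f₂ g τ ∉ closure (code f₁ f₂ g '' C) := by
  intro hmem
  obtain ⟨x, hx, hlim⟩ := mem_closure_iff_seq_limit.1 hmem
  choose y hyC hxy using hx
  replace hlim : Tendsto (fun n => code f₁ f₂ g (y n)) atTop (𝓝 (code f₁ f₂ g τ)) := by
    simpa only [hxy] using hlim
  have hsub : ∀ P : T → Prop, (∃ᶠ n in atTop, P (y n)) → ∃ z : ℕ → T, (∀ n, z n ∈ C ∧ P (z n)) ∧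
      Tendsto (fun n => code f₁ f₂ g (z n)) atTop (𝓝 (code f₁ f₂ g τ)) := fun P hP => by
    obtain ⟨φ, hφ, hPφ⟩ := extraction_of_frequently_atTop hP
    exact ⟨y ∘ φ, fun n => ⟨hyC _, hPφ n⟩, hlim.comp hφ.tendsto_atTop⟩
  have hcases : ∀ n, f₁ τ < f₁ (y n) ∨ (f₁ (y n) = f₁ τ ∧ f₂ τ < f₂ (y n)) ∨
      y n < blockMin f₁ τ ∨ (blockMin f₁ τ ≤ y n ∧ y n < τ) ∨
      (¬ y n ≤ τ ∧ ¬ τ ≤ y n ∧ f₁ (y n) ≤ f₁ τ) := fun n =>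
    position_cases_of_ne hf fun h => hτ (h ▸ hyC n)
  have hfreq := Frequently.of_forall (f := atTop) hcases
  simp only [frequently_or_distrib] at hfreq
  rcases hfreq with h | h | h | h | h
  · obtain ⟨z, hz, hzlim⟩ := hsub (fun t => f₁ τ < f₁ t) h
    exact not_tendsto_fst_of_fst_lt hf (fun n => hCb (hz n).1) (fun n => (hz n).2)
      (tendsto_code_iff.1 hzlim).1
  · obtain ⟨z, hz, hzlim⟩ := hsub (fun t => f₁ t = f₁ τ ∧ f₂ τ < f₂ t) h
    exact not_tendsto_snd_of_snd_lt hf (fun n => hCb (hz n).1) (fun n => (hz n).2.1)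
      (fun n => (hz n).2.2) (tendsto_code_iff.1 hzlim).2.1
  · obtain ⟨z, hz, hzlim⟩ := hsub (· < blockMin f₁ τ) h
    exact not_tendsto_fst_of_lt_blockMin hf hC (fun n => (hz n).1) hmτ (fun n => (hz n).2)
      (tendsto_code_iff.1 hzlim).1
  · obtain ⟨z, hz, hzlim⟩ := hsub (fun t => blockMin f₁ τ ≤ t ∧ t < τ) h
    exact not_tendsto_snd_of_blockMin_le hf hC (fun n => (hz n).1) hτ (fun n => (hz n).2.1)
      (fun n => (hz n).2.2) (tendsto_code_iff.1 hzlim).2.1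
  · obtain ⟨z, hz, hzlim⟩ := hsub (fun t => ¬ t ≤ τ ∧ ¬ τ ≤ t ∧ f₁ t ≤ f₁ τ) h
    exact not_tendsto_code_of_incomparable hf hg (fun n => hCb (hz n).1) (fun n => (hz n).2.1)
      (fun n => (hz n).2.2.1) (fun n => (hz n).2.2.2) hzlim

theorem codePair_notMem_closure_image (hf : StrictMono fun t => toLex (f₁ t, f₂ t))
    {g : T → ℝ} (hg : Function.Injective g) {C : Set T} {b τ : T} (hC : IsClosed C)
    (hCb : C ⊆ Iic b) (hτ : τ ∉ C) (hmτ : blockMin f₁ τ ∉ C) :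
    (code f₁ f₂ g τ, code f₁ f₂ g (blockMin f₁ τ)) ∉
      closure ((fun t => (code f₁ f₂ g t, code f₁ f₂ g (blockMin f₁ t))) ''
        (C ∪ blockMin f₁ ⁻¹' C)) := by
  rw [image_union, closure_union]
  rintro (h | h)
  · have := mem_closure_image continuous_fst.continuousAt h
    rw [image_image] at this
    exact code_notMem_closure_image hf hg hC hCb hτ hmτ this
  · have := mem_closure_image continuous_snd.continuousAt h
    rw [image_image, ← image_image (code f₁ f₂ g)] at this
    exact code_notMem_closure_image hf hg hC hCb hmτ (by rwa [blockMin_blockMin])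
      (closure_mono (image_mono (image_preimage_subset _ _)) this)

end LexEmbedding

end TreeOrder

theorem exists_injective_real_of_mk_le_continuum {T : Type u}
    (hT : Cardinal.mk T ≤ Cardinal.continuum.{u}) : ∃ g : T → ℝ, Function.Injective g := by
  have : Cardinal.lift.{0} (Cardinal.mk T) ≤ Cardinal.lift.{u} (Cardinal.mk ℝ) := by
    simpa [Cardinal.mk_real] using hT
  obtain ⟨e⟩ := Cardinal.lift_mk_le'.1 this
  exact ⟨e, e.injective⟩

open TreeOrder in
/-- If a tree `T` of cardinality at most the continuum is embeddable into the
lexicographic product `ℝ ×ₗ ℝ`, then its one-point compactification is `3`-determined. -/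
theorem threeDetermined_of_lexEmbeddable {T : Type u} [TreeOrder T]
    (f : T → ℝ ×ₗ ℝ) (hf : StrictMono f) (hT : Cardinal.mk T ≤ Cardinal.continuum.{u}) :
    NDetermined 3 (OnePoint T) := by
  obtain ⟨g, hg⟩ := exists_injective_real_of_mk_le_continuum hT
  set f₁ : T → ℝ := fun t => (ofLex (f t)).1
  set f₂ : T → ℝ := fun t => (ofLex (f t)).2
  have hf' : StrictMono fun t => toLex (f₁ t, f₂ t) := hf
  set c := fun t => (code f₁ f₂ g t, code f₁ f₂ g (blockMin f₁ t))
  refine ⟨T, .induced c inferInstance, TopologicalSpace.secondCountableTopology_induced T _ c,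
    fun t => {↑t, ↑(blockMin f₁ t), ∞}, fun t => ⟨insert_nonempty _ _, toFinite _, ?_⟩, ?_, ?_⟩
  · exact (ncard_insert_le _ _).trans (by simp)
  · intro t V hV htV
    simp only [insert_subset_iff, singleton_subset_iff] at htV
    obtain ⟨W, hW, htW, hWV⟩ := exists_isOpen_forall_mem_of_notMem_closure
      (fun _ _ _ hC hCb hτ hmτ => codePair_notMem_closure_image hf' hg hC hCb hτ hmτ)
      hV htV.2.2 htV.1 htV.2.1
    exact ⟨c ⁻¹' W, isOpen_induced hW, htW, fun s hs => by
      simp [insert_subset_iff, hWV s hs, htV.2.2]⟩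
  · refine eq_univ_of_forall fun x => mem_iUnion.2 ?_
    induction x using OnePoint.rec with
    | infty => exact ⟨⊥, by simp⟩
    | coe t => exact ⟨t, by simp⟩
end
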